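/- arXiv:2409.17965 — 4 statements merged into one kernel-verified Lean document; each statement's English description precedes it below -/
import Mathlib

section
/- Let R be a commutative ring and f : M → N an injective pure map of R-modules whose cokernel N/f(M) is a finitely presented R-module. Then f splits, i.e., there exists an R-module map s : N → M with s ∘ f = id_M. -/
/-!
Present the cokernel `Q = N ⧸ f(M)` as `R^m →g R^n →p Q → 0` and lift `p` to `ρ : R^n → N`.
The relations `ρ ∘ g` land in `f(M)`, and purity says that a system of linear equations with
constants in `M` that is solvable in `N` is already solvable in `M`: via `Hom(A, X) ≅ A^* ⊗ X`
for finite projective `A`, solvability is the vanishing of an element of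
`coker(g^*) ⊗ M`, which can be tested in `coker(g^*) ⊗ N`. Correcting `ρ` by such a solution
gives a section of `N → Q`, hence a retraction of `f`.
-/

universe u

/-- An `R`-module map `f : M → N` is *pure* if for every `R`-module `P` the induced map
`P ⊗[R] M → P ⊗[R] N` is injective. -/
def IsPureMap {R M N : Type u} [CommRing R] [AddCommGroup M] [Module R M]
    [AddCommGroup N] [Module R N] (f : M →ₗ[R] N) : Prop :=
  ∀ (P : Type u) [AddCommGroup P] [Module R P], Function.Injective (LinearMap.lTensor P f)

open LinearMap

theorem LinearMap.exists_comp_eq_of_range_le {R M N A : Type*} [Semiring R] [AddCommMonoid M]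
    [Module R M] [AddCommMonoid N] [Module R N] [AddCommMonoid A] [Module R A]
    {f : M →ₗ[R] N} (hf : Function.Injective f) {h : A →ₗ[R] N} (hle : range h ≤ range f) :
    ∃ x : A →ₗ[R] M, f ∘ₗ x = h :=
  ⟨(LinearEquiv.ofInjective f hf).symm.toLinearMap ∘ₗ h.codRestrict _ fun a ↦ hle ⟨a, rfl⟩, by
    ext a; simp [← LinearEquiv.ofInjective_apply (h := hf)]⟩

theorem Function.Exact.exists_comp_eq_of_comp_eq_zero {R A B F N : Type*} [Ring R]
    [AddCommGroup A] [Module R A] [AddCommGroup B] [Module R B] [AddCommGroup F] [Module R F]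
    [AddCommGroup N] [Module R N] {g : A →ₗ[R] B} {p : B →ₗ[R] F} (hexact : Function.Exact g p)
    (hp : Function.Surjective p) {τ : B →ₗ[R] N} (hτ : τ ∘ₗ g = 0) :
    ∃ σ : F →ₗ[R] N, σ ∘ₗ p = τ := by
  refine ⟨(range g).liftQ τ ?_ ∘ₗ (hexact.linearEquivOfSurjective hp).symm.toLinearMap, ?_⟩
  · rw [range_le_ker_iff, hτ]
  · ext b
    simp

namespace IsPureMap

variable {R M N : Type u} [CommRing R] [AddCommGroup M] [Module R M] [AddCommGroup N] [Module R N]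
  {f : M →ₗ[R] N}

theorem exists_comp_eq_of_comp_eq (hpure : IsPureMap f) {A : Type u} {B : Type*}
    [AddCommGroup A] [Module R A] [Module.Finite R A] [Module.Projective R A]
    [AddCommGroup B] [Module R B] [Module.Finite R B] [Module.Projective R B]
    (g : A →ₗ[R] B) {x : A →ₗ[R] M} {y : B →ₗ[R] N} (hxy : f ∘ₗ x = y ∘ₗ g) :
    ∃ μ : B →ₗ[R] M, μ ∘ₗ g = x := by
  obtain ⟨t, rfl⟩ := (dualTensorHom_bijective (R := R) (M := A) (N := M)).surjective x
  obtain ⟨s, rfl⟩ := (dualTensorHom_bijective (R := R) (M := B) (N := N)).surjective y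
  have hts : f.lTensor _ t = g.dualMap.rTensor N s := by
    apply (dualTensorHom_bijective (R := R) (M := A) (N := N)).injective
    calc dualTensorHom R A N (f.lTensor _ t)
        = f ∘ₗ dualTensorHom R A M t := LinearMap.congr_fun (dualTensorHom_comp_lTensor f) t
      _ = dualTensorHom R B N s ∘ₗ g := hxy
      _ = dualTensorHom R A N (g.dualMap.rTensor N s) :=
        (LinearMap.congr_fun (dualTensorHom_comp_rTensor_dualMap g) s).symm
  set q := (range g.dualMap).mkQ
  have hqt : q.rTensor M t = 0 := by
    apply hpure (Module.Dual R A ⧸ range g.dualMap)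
    rw [map_zero, ← LinearMap.comp_apply, lTensor_comp_rTensor, ← rTensor_comp_lTensor,
      LinearMap.comp_apply, hts, ← LinearMap.comp_apply, ← rTensor_comp,
      (exact_map_mkQ_range _).linearMap_comp_eq_zero, rTensor_zero, LinearMap.zero_apply]
  obtain ⟨u, rfl⟩ := (rTensor_exact M (exact_map_mkQ_range g.dualMap)
    (Submodule.mkQ_surjective _) t).mp hqt
  refine ⟨dualTensorHom R B M u, ?_⟩
  rw [← LinearMap.comp_apply (dualTensorHom R A M), dualTensorHom_comp_rTensor_dualMap]
  rfl

theorem exists_lift_of_finitePresentation (hinj : Function.Injective f) (hpure : IsPureMap f)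
    {F : Type*} [AddCommGroup F] [Module R F] [Module.FinitePresentation R F]
    (φ : F →ₗ[R] N ⧸ range f) : ∃ ψ : F →ₗ[R] N, (range f).mkQ ∘ₗ ψ = φ := by
  obtain ⟨n, m, p, g, hp, hexact⟩ := Module.FinitePresentation.exists_fin' R F
  obtain ⟨y, hy⟩ := Module.projective_lifting_property (range f).mkQ (φ ∘ₗ p)
    (Submodule.mkQ_surjective _)
  obtain ⟨x, hx⟩ : ∃ x : (Fin m → R) →ₗ[R] M, f ∘ₗ x = y ∘ₗ g := by
    refine exists_comp_eq_of_range_le hinj ?_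
    rw [← Submodule.ker_mkQ (range f), range_le_ker_iff, ← comp_assoc, hy, comp_assoc,
      hexact.linearMap_comp_eq_zero, comp_zero]
  obtain ⟨μ, hμ⟩ := hpure.exists_comp_eq_of_comp_eq g hx
  obtain ⟨ψ, hψ⟩ := hexact.exists_comp_eq_of_comp_eq_zero hp (τ := y - f ∘ₗ μ) (by
    rw [sub_comp, comp_assoc, hμ, hx, sub_self])
  refine ⟨ψ, (cancel_right hp).mp ?_⟩
  rw [comp_assoc, hψ, comp_sub, hy, ← comp_assoc, (exact_map_mkQ_range f).linearMap_comp_eq_zero,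
    zero_comp, sub_zero]

end IsPureMap

/-- An injective pure map of `R`-modules with finitely presented cokernel splits. -/
theorem IsPureMap.splits_of_finitePresentation_cokernel {R M N : Type u} [CommRing R]
    [AddCommGroup M] [Module R M] [AddCommGroup N] [Module R N]
    (f : M →ₗ[R] N) (hinj : Function.Injective f) (hpure : IsPureMap f)
    [Module.FinitePresentation R (N ⧸ LinearMap.range f)] :
    ∃ s : N →ₗ[R] M, s ∘ₗ f = LinearMap.id := by
  obtain ⟨σ, hσ⟩ := hpure.exists_lift_of_finitePresentation hinj LinearMap.id
  exact ((exact_map_mkQ_range f).split_tfae'.out 0 1 rfl rfl).mp ⟨hinj, σ, hσ⟩ |>.2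
end

section
/- Let (R, m) be a Noetherian local ring with injective hull E of the residue field R/m, let M be an R-module, and let f : R → M be an R-module map. If the induced map E ≅ R ⊗_R E → M ⊗_R E is injective, then f is a pure map of R-modules. If moreover R is m-adically complete, then f splits as a map of R-modules. -/
universe u

/-- `E`, together with an embedding `ι` of the residue field, is an injective hull of the
residue field of the local ring `R`: `E` is an injective `R`-module, `ι` is injective, and
the image of `ι` is an essential submodule of `E`. -/
def IsInjectiveHullOfResidueField (R : Type u) [CommRing R] [IsLocalRing R]
    (E : Type u) [AddCommGroup E] [Module R E]
    (ι : (R ⧸ IsLocalRing.maximalIdeal R) →ₗ[R] E) : Prop :=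
  Module.Injective R E ∧ Function.Injective ι ∧
    ∀ S : Submodule R E, S ≠ ⊥ → S ⊓ LinearMap.range ι ≠ ⊥

/-!
Two properties of `E` drive the proof. First, `E` is an injective cogenerator: a nonzero
element of any module spans a cyclic module mapping onto `R ⧸ 𝔪 ⊆ E`, and this map extends to
the whole module. Extending `R ⊗ E ≅ E` along the injection `f ⊗ E` gives `Ψ : M ⊗ E → E`
with `Ψ (f r ⊗ e) = r • e`. Every `φ : P → E`, viewed on `P ⊗ R ≅ P`, then factors through
`P ⊗ f` (as `Ψ ∘ (M ⊗ φ)` after it), so `P ⊗ f` is injective.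

Second, for complete `R` every endomorphism of `E` is a scalar. An endomorphism vanishing on
the `𝔪 ^ n`-torsion maps the `𝔪 ^ (n + 1)`-torsion into the socle `≅ R ⧸ 𝔪`, and so do the
maps `s • -` for `s ∈ 𝔪 ^ n`, whose common kernel is the `𝔪 ^ n`-torsion; by duality over the
residue field it is one of them. The scalars so obtained converge `𝔪`-adically because `E` is
faithful over each `R ⧸ 𝔪 ^ n`, and `E` is the union of its `𝔪 ^ n`-torsion by Krull's
intersection theorem. Hence `curry Ψ : M → End E ≅ R` splits `f`.
-/

open IsLocalRing Submodule LinearMap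
open scoped TensorProduct

theorem LinearMap.mem_range_of_iInf_ker_le_ker {R V W : Type*} [CommRing R] {I : Ideal R}
    [I.IsMaximal] [AddCommGroup V] [Module R V] [Module.Finite R V]
    [AddCommGroup W] [Module R W] {B : V →ₗ[R] W →ₗ[R] R ⧸ I} {θ : W →ₗ[R] R ⧸ I}
    (h : ⨅ v, ker (B v) ≤ ker θ) : θ ∈ range B := by
  let := Ideal.Quotient.field I
  obtain ⟨m, v, hv⟩ := Module.Finite.exists_fin (R := R) (M := V)
  have hker (F : W →ₗ[R] R ⧸ I) : I • (⊤ : Submodule R W) ≤ ker F :=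
    smul_le.2 fun r hr w _ ↦ by
      rw [mem_ker, map_smul, Algebra.smul_def, Ideal.Quotient.algebraMap_eq,
        Ideal.Quotient.eq_zero_iff_mem.2 hr, zero_mul]
  -- Functionals to `R ⧸ I` factor through the `R ⧸ I`-vector space `W ⧸ I • W`.
  let toDual (F : W →ₗ[R] R ⧸ I) : Module.Dual (R ⧸ I) (W ⧸ I • (⊤ : Submodule R W)) :=
    ((I • (⊤ : Submodule R W)).liftQ F (hker F)).extendScalarsOfSurjective
      Ideal.Quotient.mk_surjective
  have hspan : ⨅ i, ker (toDual (B (v i))) ≤ ker (toDual θ) := by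
    intro w hw
    obtain ⟨w, rfl⟩ := Submodule.Quotient.mk_surjective _ w
    have hBw : B.flip w = 0 := by
      refine LinearMap.ext_on_range hv fun i ↦ ?_
      simpa [toDual] using (Submodule.mem_iInf _).1 hw i
    simpa [toDual] using h (Submodule.mem_iInf _ |>.2 fun u ↦ LinearMap.congr_fun hBw u)
  obtain ⟨c, hc⟩ := (mem_span_range_iff_exists_fun _).1 (mem_span_of_iInf_ker_le_ker hspan)
  choose r hr using fun i ↦ Ideal.Quotient.mk_surjective (c i)
  refine ⟨∑ i, r i • v i, LinearMap.ext fun w ↦ ?_⟩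
  simpa [toDual, ← hr, Algebra.smul_def] using LinearMap.congr_fun hc (Submodule.Quotient.mk w)

theorem Submodule.smul_mem_torsionBySet_mul {R M : Type*} [CommRing R] [AddCommGroup M]
    [Module R M] {I J : Ideal R} {a : R} {x : M} (ha : a ∈ J)
    (hx : x ∈ torsionBySet R M ↑(I * J)) : a • x ∈ torsionBySet R M ↑I := by
  rw [mem_torsionBySet_iff] at hx ⊢
  rintro ⟨b, hb⟩
  rw [smul_smul]
  exact hx ⟨b * a, Ideal.mul_mem_mul hb ha⟩

namespace IsInjectiveHullOfResidueField

variable {R : Type u} [CommRing R] [IsLocalRing R] {E : Type u} [AddCommGroup E] [Module R E]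
  {ι : (R ⧸ maximalIdeal R) →ₗ[R] E}

local notation "𝔪" => maximalIdeal R

theorem range_le_of_ne_bot (hE : IsInjectiveHullOfResidueField R E ι) {S : Submodule R E}
    (hS : S ≠ ⊥) : range ι ≤ S := by
  have := isSimpleModule_iff_isCoatom.2 (Ideal.isMaximal_def.1 (maximalIdeal.isMaximal R))
  have : IsSimpleModule R (range ι) := .congr (LinearEquiv.ofInjective ι hE.2.1).symm
  exact inf_eq_right.1 ((isSimpleModule_iff_isAtom.1 this).le_iff.1 inf_le_right
    |>.resolve_left (hE.2.2 S hS))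

theorem range_eq_torsionBySet (hE : IsInjectiveHullOfResidueField R E ι) :
    range ι = torsionBySet R E ↑𝔪 := by
  refine le_antisymm ?_ fun e he ↦ ?_
  · rintro _ ⟨c, rfl⟩
    obtain ⟨c, rfl⟩ := Ideal.Quotient.mk_surjective c
    refine (mem_torsionBySet_iff _ _).2 fun ⟨a, ha⟩ ↦ ?_
    rw [← map_smul, Algebra.smul_def, Ideal.Quotient.algebraMap_eq, ← map_mul,
      Ideal.Quotient.eq_zero_iff_mem.2 (Ideal.mul_mem_right _ _ ha), map_zero]
  by_cases he0 : e = 0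
  · exact he0 ▸ zero_mem _
  obtain ⟨r, hr⟩ := mem_span_singleton.1
    (hE.range_le_of_ne_bot (span_singleton_eq_bot.not.2 he0) ⟨1, rfl⟩)
  -- `r • e = ι 1 ≠ 0` with `e` killed by `𝔪`, so `r` is a unit.
  have hr : IsUnit r := by
    by_contra hru
    refine hE.2.1.ne one_ne_zero (hr.symm.trans ?_ |>.trans (map_zero ι).symm)
    exact (mem_torsionBySet_iff _ _).1 he ⟨r, hru⟩
  obtain ⟨u, rfl⟩ := hr
  rw [← inv_smul_smul u e, Units.smul_def u e, hr]
  exact Submodule.smul_mem _ _ ⟨1, rfl⟩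

noncomputable def socleEquiv (hE : IsInjectiveHullOfResidueField R E ι) :
    (R ⧸ 𝔪) ≃ₗ[R] torsionBySet R E ↑𝔪 :=
  (LinearEquiv.ofInjective ι hE.2.1).trans (LinearEquiv.ofEq _ _ hE.range_eq_torsionBySet)

theorem exists_apply_ne_zero (hE : IsInjectiveHullOfResidueField R E ι) {P : Type u}
    [AddCommGroup P] [Module R P] {p : P} (hp : p ≠ 0) : ∃ φ : P →ₗ[R] E, φ p ≠ 0 := by
  have hle : Ideal.torsionOf R P p ≤ 𝔪 :=
    le_maximalIdeal ((Ideal.torsionOf_eq_top_iff (R := R) p).not.2 hp)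
  let φ₀ : (R ∙ p) →ₗ[R] E := ι ∘ₗ Submodule.factor hle ∘ₗ
    (Ideal.quotTorsionOfEquivSpanSingleton R P p).symm.toLinearMap
  obtain ⟨φ, hφ⟩ := hE.1.out _ (injective_subtype _) φ₀
  have h1 : (Ideal.quotTorsionOfEquivSpanSingleton R P p).symm ⟨p, mem_span_singleton_self p⟩ =
      Submodule.Quotient.mk 1 := by
    rw [LinearEquiv.symm_apply_eq, Ideal.quotTorsionOfEquivSpanSingleton_apply_mk, one_smul]
  refine ⟨φ, ?_⟩
  rw [show p = (R ∙ p).subtype ⟨p, mem_span_singleton_self p⟩ from rfl, hφ]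
  simpa [φ₀, h1] using (map_ne_zero_iff ι hE.2.1).2 one_ne_zero

theorem mem_of_forall_smul_eq_zero (hE : IsInjectiveHullOfResidueField R E ι) {J : Ideal R}
    {s : R} (hs : ∀ e ∈ torsionBySet R E ↑J, s • e = 0) : s ∈ J := by
  by_contra hsJ
  obtain ⟨φ, hφ⟩ := hE.exists_apply_ne_zero ((Ideal.Quotient.eq_zero_iff_mem (I := J)).not.2 hsJ)
  have hφmk (a : R) : φ (Ideal.Quotient.mk J a) = a • φ 1 := by
    rw [← map_smul, ← Algebra.algebraMap_eq_smul_one, Ideal.Quotient.algebraMap_eq]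
  have hφ1 : φ 1 ∈ torsionBySet R E ↑J := (mem_torsionBySet_iff _ _).2 fun ⟨a, ha⟩ ↦ by
    rw [← hφmk, Ideal.Quotient.eq_zero_iff_mem.2 ha, map_zero]
  exact hφ (hφmk s ▸ hs _ hφ1)

theorem lsmul_injective (hE : IsInjectiveHullOfResidueField R E ι) :
    Function.Injective (lsmul R E) := by
  refine (injective_iff_map_eq_zero _).2 fun a ha ↦ ?_
  refine (Submodule.mem_bot R).1 (hE.mem_of_forall_smul_eq_zero fun e _ ↦ ?_)
  exact LinearMap.congr_fun ha e

theorem isPureMap_of_comp_rTensor_eq_lid (hE : IsInjectiveHullOfResidueField R E ι)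
    {M : Type u} [AddCommGroup M] [Module R M] {f : R →ₗ[R] M} {Ψ : M ⊗[R] E →ₗ[R] E}
    (hΨ : Ψ ∘ₗ f.rTensor E = (TensorProduct.lid R E).toLinearMap) : IsPureMap f := by
  intro P _ _
  refine (injective_iff_map_eq_zero _).2 fun z hz ↦ (TensorProduct.rid R P).map_eq_zero_iff.1 ?_
  by_contra hp
  obtain ⟨φ, hφ⟩ := hE.exists_apply_ne_zero hp
  have key : Ψ ∘ₗ φ.lTensor M ∘ₗ (TensorProduct.comm R P M).toLinearMap ∘ₗ f.lTensor P =
      φ ∘ₗ (TensorProduct.rid R P).toLinearMap := by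
    refine TensorProduct.ext' fun p r ↦ ?_
    simpa using LinearMap.congr_fun hΨ (r ⊗ₜ φ p)
  exact hφ (by simpa [hz] using (LinearMap.congr_fun key z).symm)

variable [IsNoetherianRing R]

theorem exists_mem_torsionBySet_pow (hE : IsInjectiveHullOfResidueField R E ι) (e : E) :
    ∃ n, e ∈ torsionBySet R E ↑(𝔪 ^ n) := by
  by_contra! he
  let N := R ∙ e
  have hne (n : ℕ) : 𝔪 ^ n • N ≠ ⊥ := by
    obtain ⟨⟨a, ha⟩, hae⟩ := not_forall.1 (mt (mem_torsionBySet_iff _ _).2 (he n))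
    exact (Submodule.ne_bot_iff _).2 ⟨a • e, smul_mem_smul ha (mem_span_singleton_self e), hae⟩
  have hKrull : (⨅ n : ℕ, 𝔪 ^ n • ⊤ : Submodule R N) = ⊥ :=
    Ideal.iInf_pow_smul_eq_bot_of_isLocalRing _ (maximalIdeal.isMaximal R).ne_top
  let u : N := ⟨ι 1, hE.range_le_of_ne_bot (by simpa using hne 0) (mem_range_self ι 1)⟩
  have : u ∈ (⨅ n : ℕ, 𝔪 ^ n • ⊤ : Submodule R N) := by
    refine mem_iInf _ |>.2 fun n ↦ (injective_subtype N).mem_set_image.1 ?_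
    have hmap : 𝔪 ^ n • N = map N.subtype (𝔪 ^ n • ⊤) := by rw [map_smul'', map_subtype_top]
    exact (hmap ▸ hE.range_le_of_ne_bot (hne n) (mem_range_self ι 1) :
      N.subtype u ∈ map N.subtype (𝔪 ^ n • ⊤))
  rw [hKrull, mem_bot] at this
  exact (map_ne_zero_iff ι hE.2.1).2 one_ne_zero (congrArg Subtype.val this)

theorem exists_mem_pow_eq_smul_of_eq_zero_on_torsionBySet
    (hE : IsInjectiveHullOfResidueField R E ι) (n : ℕ) (θ : E →ₗ[R] E) (hθ : ∀ e ∈ torsionBySet R E ↑(𝔪 ^ n), θ e = 0) :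
    ∃ s ∈ 𝔪 ^ n, ∀ e ∈ torsionBySet R E ↑(𝔪 ^ (n + 1)), θ e = s • e := by
  have hθE₁ (e : E) (he : e ∈ torsionBySet R E ↑(𝔪 ^ (n + 1))) : θ e ∈ torsionBySet R E ↑𝔪 :=
    (mem_torsionBySet_iff _ _).2 fun ⟨a, ha⟩ ↦ by
      rw [← map_smul]
      exact hθ _ (smul_mem_torsionBySet_mul ha (by rwa [← pow_succ]))
  have hsE₁ (s : ↥(𝔪 ^ n)) (e : torsionBySet R E ↑(𝔪 ^ (n + 1))) :
      (s : R) • (e : E) ∈ torsionBySet R E ↑𝔪 :=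
    smul_mem_torsionBySet_mul s.2 (by rw [← pow_succ']; exact e.2)
  let B : ↥(𝔪 ^ n) →ₗ[R] torsionBySet R E ↑(𝔪 ^ (n + 1)) →ₗ[R] R ⧸ 𝔪 :=
    (LinearMap.mk₂ R (fun (s : ↥(𝔪 ^ n)) (e : torsionBySet R E ↑(𝔪 ^ (n + 1))) ↦
        (⟨(s : R) • (e : E), hsE₁ s e⟩ : torsionBySet R E ↑𝔪))
      (fun _ _ _ ↦ Subtype.ext (add_smul ..)) (fun _ _ _ ↦ Subtype.ext (smul_assoc ..))
      (fun _ _ _ ↦ Subtype.ext (smul_add ..)) (fun _ _ _ ↦ Subtype.ext (smul_comm ..))).compr₂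
      hE.socleEquiv.symm.toLinearMap
  obtain ⟨s, hs⟩ := mem_range_of_iInf_ker_le_ker (B := B)
    (θ := hE.socleEquiv.symm.toLinearMap ∘ₗ θ.restrict hθE₁) fun e he ↦ by
      have hs (s : ↥(𝔪 ^ n)) : (s : R) • (e : E) = 0 :=
        congrArg Subtype.val (hE.socleEquiv.symm.map_eq_zero_iff.1 ((mem_iInf _).1 he s))
      have : θ.restrict hθE₁ e = 0 :=
        Subtype.ext (hθ e ((mem_torsionBySet_iff _ _).2 fun ⟨a, ha⟩ ↦ hs ⟨a, ha⟩))
      rw [mem_ker, comp_apply, this, map_zero]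
  refine ⟨s, s.2, fun e he ↦ ?_⟩
  have := hE.socleEquiv.symm.injective (LinearMap.congr_fun hs ⟨e, he⟩)
  exact congrArg Subtype.val this.symm

theorem exists_eq_smul_on_torsionBySet_pow (hE : IsInjectiveHullOfResidueField R E ι)
    (φ : E →ₗ[R] E) (n : ℕ) : ∃ r : R, ∀ e ∈ torsionBySet R E ↑(𝔪 ^ n), φ e = r • e := by
  induction n with
  | zero =>
    refine ⟨0, fun e he ↦ ?_⟩
    have he : e = 0 := by simpa using (mem_torsionBySet_iff _ _).1 he ⟨1, by simp⟩
    rw [he, map_zero, smul_zero]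
  | succ n ih =>
    obtain ⟨r, hr⟩ := ih
    obtain ⟨s, -, hs⟩ := hE.exists_mem_pow_eq_smul_of_eq_zero_on_torsionBySet n (φ - lsmul R E r)
      fun e he ↦ by rw [LinearMap.sub_apply, lsmul_apply, hr e he, sub_self]
    refine ⟨r + s, fun e he ↦ ?_⟩
    rw [add_smul, ← hs e he, LinearMap.sub_apply, lsmul_apply, add_sub_cancel]

theorem lsmul_surjective (hE : IsInjectiveHullOfResidueField R E ι)
    (hc : IsAdicComplete 𝔪 R) : Function.Surjective (lsmul R E) := by
  intro φ
  choose r hr using hE.exists_eq_smul_on_torsionBySet_pow φ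
  obtain ⟨L, hL⟩ := hc.toIsPrecomplete.prec (f := r) fun {m n} hmn ↦ by
    rw [SModEq.sub_mem, smul_eq_mul, Ideal.mul_top]
    refine hE.mem_of_forall_smul_eq_zero fun e he ↦ ?_
    rw [sub_smul, ← hr m e he, ← hr n e (torsionBySet_le_torsionBySet_pow _ _ hmn _ he), sub_self]
  refine ⟨L, LinearMap.ext fun e ↦ ?_⟩
  obtain ⟨n, hn⟩ := hE.exists_mem_torsionBySet_pow e
  have hLn : r n - L ∈ 𝔪 ^ n := by
    simpa only [SModEq.sub_mem, smul_eq_mul, Ideal.mul_top] using hL n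
  have := (mem_torsionBySet_iff _ _).1 hn ⟨_, hLn⟩
  rw [sub_smul, sub_eq_zero] at this
  rw [lsmul_apply, hr n e hn, this]

theorem exists_comp_eq_id_of_comp_rTensor_eq_lid
    (hE : IsInjectiveHullOfResidueField R E ι) (hc : IsAdicComplete 𝔪 R)
    {M : Type u} [AddCommGroup M] [Module R M] {f : R →ₗ[R] M} {Ψ : M ⊗[R] E →ₗ[R] E}
    (hΨ : Ψ ∘ₗ f.rTensor E = (TensorProduct.lid R E).toLinearMap) :
    ∃ g : M →ₗ[R] R, g ∘ₗ f = LinearMap.id := by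
  let ev := LinearEquiv.ofBijective (lsmul R E) ⟨hE.lsmul_injective, hE.lsmul_surjective hc⟩
  refine ⟨ev.symm.toLinearMap ∘ₗ TensorProduct.curry Ψ,
    LinearMap.ext fun r ↦ ev.symm_apply_eq.2 (LinearMap.ext fun e ↦ ?_)⟩
  change Ψ (f r ⊗ₜ e) = r • e
  simpa using LinearMap.congr_fun hΨ (r ⊗ₜ e)

end IsInjectiveHullOfResidueField

/-- Let `(R, 𝔪)` be a Noetherian local ring with injective hull `E` of the residue field,
`M` an `R`-module and `f : R → M` an `R`-linear map.  If the induced map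
`E ≅ R ⊗[R] E → M ⊗[R] E` is injective, then `f` is pure; if moreover `R` is
`𝔪`-adically complete, then `f` splits. -/
theorem pure_of_injective_after_tensor_injectiveHull
    (R : Type u) [CommRing R] [IsLocalRing R] [IsNoetherianRing R]
    (E : Type u) [AddCommGroup E] [Module R E]
    (ι : (R ⧸ IsLocalRing.maximalIdeal R) →ₗ[R] E)
    (hE : IsInjectiveHullOfResidueField R E ι)
    (M : Type u) [AddCommGroup M] [Module R M] (f : R →ₗ[R] M)
    (hinj : Function.Injective (LinearMap.rTensor E f)) :
    IsPureMap f ∧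
      (IsAdicComplete (IsLocalRing.maximalIdeal R) R →
        ∃ g : M →ₗ[R] R, g ∘ₗ f = LinearMap.id) := by
  obtain ⟨Ψ, hΨ⟩ := hE.1.out _ hinj (TensorProduct.lid R E).toLinearMap
  have hΨ' : Ψ ∘ₗ f.rTensor E = (TensorProduct.lid R E).toLinearMap := LinearMap.ext hΨ
  exact ⟨hE.isPureMap_of_comp_rTensor_eq_lid hΨ',
    fun hc ↦ hE.exists_comp_eq_id_of_comp_rTensor_eq_lid hc hΨ'⟩
end

section
/- Let R be a Noetherian ring. Then the natural ring map R → ∏_m (R_m)^, where the product runs over all maximal ideals m of R and (R_m)^ denotes the m-adic completion of the localization R_m, is faithfully flat. In particular this map is pure. -/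
universe u

instance (R : Type u) [CommRing R] (m : {I : Ideal R // I.IsMaximal}) : m.1.IsPrime :=
  m.2.isPrime

/-- The product `∏_𝔪 (R_𝔪)^∧`, over all maximal ideals `𝔪` of `R`, of the `𝔪`-adic
completions of the localizations `R_𝔪`. -/
abbrev ProdOfCompletedLocalizations (R : Type u) [CommRing R] : Type u :=
  Π m : {I : Ideal R // I.IsMaximal},
    AdicCompletion (IsLocalRing.maximalIdeal (Localization.AtPrime m.1))
      (Localization.AtPrime m.1)

/-- The natural ring map `R → ∏_𝔪 (R_𝔪)^∧`. -/
noncomputable def toProdOfCompletedLocalizations (R : Type u) [CommRing R] :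
    R →+* ProdOfCompletedLocalizations R :=
  Pi.ringHom fun m =>
    ((algebraMap (Localization.AtPrime m.1)
        (AdicCompletion (IsLocalRing.maximalIdeal (Localization.AtPrime m.1))
          (Localization.AtPrime m.1))).comp
      (algebraMap R (Localization.AtPrime m.1)))

noncomputable instance (R : Type u) [CommRing R] :
    Algebra R (ProdOfCompletedLocalizations R) :=
  (toProdOfCompletedLocalizations R).toAlgebra

/-! Over a Noetherian ring the syzygies of a finite relation form a finitely generated module, so
one generating set of them trivialises that relation in every factor of a product of flat modules
at once; by the equational criterion, products of flat modules are flat. Each factor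
`(R_𝔪)^∧` is flat over `R_𝔪`, hence over `R`, and its maximal ideal contracts to `𝔪`, so
`𝔪 • ∏ ≠ ∏` for every maximal ideal `𝔪`. Finally `M → S ⊗ M` is injective for a faithfully flat
algebra `S`, which is purity. -/

open IsLocalRing

theorem Module.exists_uniform_trivialRelation_coefficients {R : Type*} [CommRing R]
    [IsNoetherianRing R] {ι : Type*} [Fintype ι] (f : ι → R) :
    ∃ (k : ℕ) (a : ι → Fin k → R), (∀ j, ∑ i, f i * a i j = 0) ∧
      ∀ {M : Type*} [AddCommGroup M] [Module R M] (x : ι → M), IsTrivialRelation f x →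
        ∃ y : Fin k → M, ∀ i, x i = ∑ j, a i j • y j := by
  obtain ⟨k, g, hg⟩ := Submodule.fg_iff_exists_fin_generating_family.mp
    (IsNoetherian.noetherian (LinearMap.ker (Fintype.linearCombination R f)))
  have mem_syzygies : ∀ v : ι → R, v ∈ Submodule.span R (Set.range g) ↔ ∑ i, f i * v i = 0 := by
    intro v
    rw [hg, LinearMap.mem_ker, Fintype.linearCombination_apply]
    simp only [smul_eq_mul, mul_comm]
  refine ⟨k, fun i j => g j i, fun j => (mem_syzygies (g j)).mp (Submodule.subset_span ⟨j, rfl⟩),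
    ?_⟩
  rintro M _ _ x ⟨k', b, z, hxz, hb⟩
  choose c hc using fun j' =>
    (Submodule.mem_span_range_iff_exists_fun R).mp ((mem_syzygies fun i => b i j').mpr (hb j'))
  refine ⟨fun j => ∑ j', c j' j • z j', fun i => ?_⟩
  calc x i = ∑ j', b i j' • z j' := hxz i
    _ = ∑ j', (∑ j, c j' j * g j i) • z j' := by
        congr! with j'
        simpa using (congrFun (hc j') i).symm
    _ = ∑ j, g j i • ∑ j', c j' j • z j' := by
        simp only [Finset.sum_smul, Finset.smul_sum, smul_smul, mul_comm]
        exact Finset.sum_comm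

instance Module.Flat.pi_of_isNoetherianRing {R : Type*} [CommRing R] [IsNoetherianRing R]
    {ι : Type*} (M : ι → Type*) [∀ i, AddCommGroup (M i)] [∀ i, Module R (M i)]
    [∀ i, Module.Flat R (M i)] : Module.Flat R (Π i, M i) := by
  refine Module.Flat.of_forall_isTrivialRelation fun {l f x} hfx => ?_
  obtain ⟨k, a, ha, hlift⟩ := Module.exists_uniform_trivialRelation_coefficients f
  have hcomponent : ∀ i, ∃ y : Fin k → M i, ∀ s, x s i = ∑ j, a s j • y j := fun i =>
    hlift _ (Module.Flat.isTrivialRelation_of_sum_smul_eq_zero (by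
      simpa [Finset.sum_apply] using congrFun hfx i))
  choose y hy using hcomponent
  exact ⟨k, a, fun j i => y i j, fun s => funext fun i => by simp [hy, Finset.sum_apply], ha⟩

theorem Submodule.smul_top_ne_top_of_surjective {R M N : Type*} [CommSemiring R]
    [AddCommMonoid M] [Module R M] [AddCommMonoid N] [Module R N] {I : Ideal R}
    {f : M →ₗ[R] N} (hf : Function.Surjective f) (hN : I • (⊤ : Submodule R N) ≠ ⊤) :
    I • (⊤ : Submodule R M) ≠ ⊤ := by
  intro hM
  apply hN
  rw [← LinearMap.range_eq_top.mpr hf, LinearMap.range_eq_map, ← Submodule.map_smul'', hM]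

theorem Module.FaithfullyFlat.pi {R : Type*} [CommRing R] {ι : Type*} (M : ι → Type*)
    [∀ i, AddCommGroup (M i)] [∀ i, Module R (M i)] [Module.Flat R (Π i, M i)]
    (h : ∀ m : Ideal R, m.IsMaximal → ∃ i, m • (⊤ : Submodule R (M i)) ≠ ⊤) :
    Module.FaithfullyFlat R (Π i, M i) where
  submodule_ne_top m hm :=
    have ⟨i, hi⟩ := h m hm
    Submodule.smul_top_ne_top_of_surjective (f := LinearMap.proj i)
      (Function.surjective_eval i) hi

theorem Ideal.smul_top_ne_top_of_le_comap {A B : Type*} [CommSemiring A] [CommSemiring B]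
    [Algebra A B] {I : Ideal A} {P : Ideal B} (hP : P ≠ ⊤) (hI : I ≤ P.comap (algebraMap A B)) :
    I • (⊤ : Submodule A B) ≠ ⊤ := by
  rw [Ideal.smul_top_eq_map, Ne, Submodule.restrictScalars_eq_top_iff, ← top_le_iff]
  exact fun htop => hP (top_le_iff.mp (htop.trans (Ideal.map_le_iff_le_comap.mpr hI)))

instance flat_adicCompletion_localization {R : Type*} [CommRing R] [IsNoetherianRing R]
    (p : Ideal R) [p.IsPrime] :
    Module.Flat R (AdicCompletion (maximalIdeal (Localization.AtPrime p))
      (Localization.AtPrime p)) :=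
  Module.Flat.trans R (Localization.AtPrime p) _

theorem smul_top_adicCompletion_localization_ne_top {R : Type*} [CommRing R]
    [IsNoetherianRing R] (m : Ideal R) [m.IsMaximal] :
    m • (⊤ : Submodule R (AdicCompletion (maximalIdeal (Localization.AtPrime m))
      (Localization.AtPrime m))) ≠ ⊤ := by
  refine Ideal.smul_top_ne_top_of_le_comap (maximalIdeal.isMaximal _).ne_top (le_of_eq ?_)
  rw [IsScalarTower.algebraMap_eq R (Localization.AtPrime m), ← Ideal.comap_comap,
    maximalIdeal_comap]
  exact Localization.AtPrime.under_maximalIdeal.symm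

theorem IsPureMap.algebraLinearMap_of_faithfullyFlat {R S : Type u} [CommRing R] [CommRing S]
    [Algebra R S] [Module.FaithfullyFlat R S] : IsPureMap (Algebra.linearMap R S) := by
  intro P _ _
  have h : (TensorProduct.comm R P S).toLinearMap ∘ₗ LinearMap.lTensor P (Algebra.linearMap R S)
      ∘ₗ (TensorProduct.rid R P).symm.toLinearMap = TensorProduct.mk R S P 1 := by
    ext p; simp
  have hinj := Module.FaithfullyFlat.tensorProduct_mk_injective (A := R) (B := S) P
  rwa [← h, LinearMap.coe_comp, LinearMap.coe_comp, LinearEquiv.coe_coe, LinearEquiv.coe_coe,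
    EquivLike.comp_injective, EquivLike.injective_comp] at hinj

/-- For a Noetherian ring `R`, the natural map `R → ∏_𝔪 (R_𝔪)^∧` (product over all maximal
ideals `𝔪`, where `(R_𝔪)^∧` is the `𝔪`-adic completion of the localization) is faithfully
flat; in particular it is pure. -/
theorem faithfullyFlat_toProdOfCompletedLocalizations
    (R : Type u) [CommRing R] [IsNoetherianRing R] :
    Module.FaithfullyFlat R (ProdOfCompletedLocalizations R) ∧
      @IsPureMap R R (ProdOfCompletedLocalizations R) _ _ _ _ Algebra.toModule
        (Algebra.linearMap R (ProdOfCompletedLocalizations R)) := by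
  have hff : Module.FaithfullyFlat R (ProdOfCompletedLocalizations R) :=
    Module.FaithfullyFlat.pi _ fun m hm =>
      ⟨⟨m, hm⟩, smul_top_adicCompletion_localization_ne_top m⟩
  -- The product module structure agrees only propositionally with the one from the algebra.
  have hmodule : (inferInstance : Module R (ProdOfCompletedLocalizations R)) =
      Algebra.toModule :=
    Module.ext' _ _ fun r x => funext fun m => by
      show r • x m = algebraMap (Localization.AtPrime m.1) _
        (algebraMap R (Localization.AtPrime m.1) r) * x m
      rw [← Algebra.smul_def, algebraMap_smul]
  have : @Module.FaithfullyFlat R (ProdOfCompletedLocalizations R) _ _ Algebra.toModule := by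
    rw [← hmodule]; exact hff
  exact ⟨hff, IsPureMap.algebraLinearMap_of_faithfullyFlat⟩
end

section
/- Let S be a Noetherian ring, f_1, …, f_c, y_1, …, y_d a regular sequence on S, and let S → T be a faithfully flat ring map. Suppose each f_j admits a compatible system of p-power roots f_j^{1/p^e} in T. Then for every e ≥ 0, the sequence y_1, …, y_d is a regular sequence on T/(f_1^{1/p^e}, …, f_c^{1/p^e}), and hence also on the colimit T/(f_1^{1/p^∞}, …, f_c^{1/p^∞}) := colim_e T/(f_1^{1/p^e}, …, f_c^{1/p^e}). -/
/-!
Flat base change carries the regular sequence `f, y` to `T`, and powers of a weakly regular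
sequence stay weakly regular (the extensions `0 → M/xⁿM → M/xⁿ⁺¹M → M/xM → 0`), so
`(f^{1/p^e})^{k p^e}, y` is weakly regular on `T` for every `k`. Conversely, if `x^q, zs` is
weakly regular on `T/J` then so is `x, zs`: going along `zs`, the `x`-power torsion of
`T/(J, z₁, …, zᵢ)` stays inside every `(xᵏ)`, which is what lets one cancel the factor
`x^{k(q-1)}` from a relation `x^{k(q-1)} zᵢ₊₁ t ∈ (J, z₁, …, zᵢ, x^{kq})`. Removing the roots one at
a time gives `y` weakly regular on `T/(f^{1/p^e})`; properness holds because `(f^{1/p^e}, y)` lies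
in the radical of `(f, y)T ≠ T`. The colimit is the quotient by the directed union of these
ideals, and colon conditions and properness pass to directed unions.
-/

universe u

open RingTheory.Sequence Submodule Pointwise

namespace RingTheory.Sequence

variable {R M : Type*} [CommRing R] [AddCommGroup M] [Module R M]

theorem isWeaklyRegular_of_subsingleton [Subsingleton M] (rs : List R) : IsWeaklyRegular M rs :=
  (isWeaklyRegular_iff M rs).mpr fun _ _ _ _ _ => Subsingleton.elim _ _

theorem isWeaklyRegular_of_exact {M₁ M₂ M₃ : Type*} [AddCommGroup M₁] [AddCommGroup M₂]
    [AddCommGroup M₃] [Module R M₁] [Module R M₂] [Module R M₃] {rs : List R}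
    {f : M₁ →ₗ[R] M₂} {g : M₂ →ₗ[R] M₃} (hf : Function.Injective f) (hfg : Function.Exact f g)
    (hg : Function.Surjective g) (h₁ : IsWeaklyRegular M₁ rs) (h₃ : IsWeaklyRegular M₃ rs) :
    IsWeaklyRegular M₂ rs := by
  induction rs generalizing M₁ M₂ M₃ with
  | nil => exact .nil R M₂
  | cons r rs ih =>
    rw [isWeaklyRegular_cons_iff] at h₁ h₃ ⊢
    refine ⟨isSMulRegular_of_range_eq_ker hf hfg.linearMap_ker_eq.symm h₁.1 h₃.1,
      ih ?_ (QuotSMulTop.map_exact r hfg hg) (QuotSMulTop.map_surjective r hg) h₁.2 h₃.2⟩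
    have := QuotSMulTop.map_first_exact_on_four_term_exact_of_isSMulRegular_last
      ((LinearMap.exact_zero_iff_injective M₁ f).mpr hf) hfg h₃.1
    rwa [map_zero, LinearMap.exact_zero_iff_injective] at this

theorem mem_smul_top_iff_exists {x : R} {m : M} :
    m ∈ x • (⊤ : Submodule R M) ↔ ∃ m', x • m' = m := by
  simp [mem_smul_pointwise_iff_exists]

theorem pow_smul_top_le_comap_lsmul (x : R) (n : ℕ) :
    x ^ n • (⊤ : Submodule R M) ≤ comap (LinearMap.lsmul R M x) (x ^ (n + 1) • ⊤) := by
  intro m hm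
  obtain ⟨m', rfl⟩ := mem_smul_top_iff_exists.mp hm
  exact mem_smul_top_iff_exists.mpr ⟨m', by rw [LinearMap.lsmul_apply, smul_smul, ← pow_succ']⟩

theorem pow_succ_smul_top_le (x : R) (n : ℕ) : x ^ (n + 1) • (⊤ : Submodule R M) ≤ x • ⊤ := by
  intro m hm
  obtain ⟨m', rfl⟩ := mem_smul_top_iff_exists.mp hm
  exact mem_smul_top_iff_exists.mpr ⟨x ^ n • m', by rw [smul_smul, pow_succ']⟩

theorem injective_mapQ_lsmul {x : R} (hx : IsSMulRegular M x) (n : ℕ) :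
    Function.Injective (mapQ _ _ _ (pow_smul_top_le_comap_lsmul (M := M) x n)) := by
  refine (injective_iff_map_eq_zero _).mpr fun y hy => ?_
  obtain ⟨m, rfl⟩ := Submodule.Quotient.mk_surjective _ y
  rw [mapQ_apply, LinearMap.lsmul_apply, Submodule.Quotient.mk_eq_zero] at hy
  obtain ⟨m', hm'⟩ := mem_smul_top_iff_exists.mp hy
  rw [Submodule.Quotient.mk_eq_zero]
  exact mem_smul_top_iff_exists.mpr
    ⟨m', hx (show x • x ^ n • m' = x • m by rwa [smul_smul, ← pow_succ'])⟩

theorem exact_mapQ_lsmul_factor (x : R) (n : ℕ) :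
    Function.Exact (mapQ _ _ _ (pow_smul_top_le_comap_lsmul (M := M) x n))
      (factor (pow_succ_smul_top_le x n)) := by
  intro y
  obtain ⟨m, rfl⟩ := mkQ_surjective _ y
  rw [factor_mk, mkQ_apply, Submodule.Quotient.mk_eq_zero, mem_smul_top_iff_exists]
  constructor
  · rintro ⟨m', rfl⟩
    exact ⟨Submodule.Quotient.mk m', rfl⟩
  · rintro ⟨y', hy'⟩
    obtain ⟨m', rfl⟩ := mkQ_surjective _ y'
    rw [mkQ_apply, mapQ_apply, LinearMap.lsmul_apply, mkQ_apply, Submodule.Quotient.eq] at hy'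
    obtain ⟨m'', hm''⟩ := mem_smul_top_iff_exists.mp (neg_mem hy')
    exact ⟨m' + x ^ n • m'', by rw [smul_add, smul_smul, ← pow_succ', hm'']; abel⟩

theorem isWeaklyRegular_quotSMulTop_pow {x : R} (hx : IsSMulRegular M x) {rs : List R}
    (h : IsWeaklyRegular (QuotSMulTop x M) rs) (n : ℕ) :
    IsWeaklyRegular (QuotSMulTop (x ^ n) M) rs := by
  induction n with
  | zero =>
    have : Subsingleton (QuotSMulTop (x ^ 0) M) := by simp [QuotSMulTop]
    exact isWeaklyRegular_of_subsingleton rs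
  | succ n ih =>
    exact isWeaklyRegular_of_exact (injective_mapQ_lsmul hx n) (exact_mapQ_lsmul_factor x n)
      (factor_surjective _) ih h

theorem isWeaklyRegular_pow_cons {x : R} {rs : List R} (h : IsWeaklyRegular M (x :: rs)) (n : ℕ) :
    IsWeaklyRegular M (x ^ n :: rs) := by
  rw [isWeaklyRegular_cons_iff] at h ⊢
  exact ⟨h.1.pow n, isWeaklyRegular_quotSMulTop_pow h.1 h.2 n⟩

end RingTheory.Sequence

namespace Ideal

variable {T : Type*} [CommRing T]

theorem mem_sup_span_singleton_iff {I : Ideal T} {x y : T} :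
    x ∈ I ⊔ span {y} ↔ ∃ a, x - a * y ∈ I := by
  rw [sup_comm, mem_span_singleton_sup]
  refine exists_congr fun a => ⟨?_, fun h => ⟨_, h, by ring⟩⟩
  rintro ⟨b, hb, rfl⟩
  simpa using hb

theorem mem_colon_singleton_iff {I : Ideal T} {x t : T} : t ∈ I.colon {x} ↔ t * x ∈ I :=
  Submodule.mem_colon_singleton

theorem isSMulRegular_quotient_iff_colon_le (I : Ideal T) (z : T) :
    IsSMulRegular (T ⧸ I) z ↔ I.colon {z} ≤ I := by
  simp only [isSMulRegular_quotient_iff_mem_of_smul_mem, SetLike.le_def, mem_colon_singleton_iff,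
    smul_eq_mul, mul_comm z]

theorem smul_top_quotient_eq_map (J I : Ideal T) :
    (I • ⊤ : Submodule T (T ⧸ J)) = Submodule.map J.mkQ I := by
  rw [← (Submodule.map_top J.mkQ).trans (range_mkQ J), ← map_smul'', smul_eq_mul, mul_top]

noncomputable def quotientSMulTopEquiv (J I : Ideal T) :
    ((T ⧸ J) ⧸ (I • ⊤ : Submodule T (T ⧸ J))) ≃ₗ[T] T ⧸ (J ⊔ I) :=
  (Submodule.quotEquivOfEq _ _ (smul_top_quotient_eq_map J I)).trans
    (quotientQuotientEquivQuotientSup J I)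

noncomputable def quotSMulTopQuotientEquiv (J : Ideal T) (w : T) :
    QuotSMulTop w (T ⧸ J) ≃ₗ[T] T ⧸ (J ⊔ span {w}) :=
  (Submodule.quotEquivOfEq _ _ (ideal_span_singleton_smul w ⊤).symm).trans
    (quotientSMulTopEquiv J _)

variable {I : Ideal T}

theorem colon_le_sup_span_of_colon_mul_le {u v z : T} (hu : I.colon {u} ≤ I ⊔ span {v})
    (hz : (I ⊔ span {u * v}).colon {z} ≤ I ⊔ span {u * v}) :
    (I ⊔ span {v}).colon {z} ≤ I ⊔ span {v} := by
  intro t ht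
  obtain ⟨a, ha⟩ := mem_sup_span_singleton_iff.mp (mem_colon_singleton_iff.mp ht)
  have hut : u * t * z ∈ I ⊔ span {u * v} :=
    mem_sup_span_singleton_iff.mpr ⟨a, by convert I.mul_mem_left u ha using 1; ring⟩
  obtain ⟨b, hb⟩ := mem_sup_span_singleton_iff.mp (hz (mem_colon_singleton_iff.mpr hut))
  have htb : (t - b * v) * u ∈ I := by convert hb using 1; ring
  obtain ⟨c, hc⟩ := mem_sup_span_singleton_iff.mp (hu (mem_colon_singleton_iff.mpr htb))
  exact mem_sup_span_singleton_iff.mpr ⟨b + c, by convert hc using 1; ring⟩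

theorem colon_sup_span_le_of_colon_le {y w z : T} (hy : I.colon {y} ≤ I ⊔ span {w})
    (hz : (I ⊔ span {y}).colon {z} ≤ I ⊔ span {y}) :
    (I ⊔ span {z}).colon {y} ≤ I ⊔ span {z} ⊔ span {w} := by
  intro t ht
  obtain ⟨a, ha⟩ := mem_sup_span_singleton_iff.mp (mem_colon_singleton_iff.mp ht)
  have haz : a * z ∈ I ⊔ span {y} :=
    mem_sup_span_singleton_iff.mpr ⟨t, by convert I.neg_mem ha using 1; ring⟩
  obtain ⟨b, hb⟩ := mem_sup_span_singleton_iff.mp (hz (mem_colon_singleton_iff.mpr haz))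
  have htb : (t - b * z) * y ∈ I := by convert I.add_mem ha (I.mul_mem_right z hb) using 1; ring
  obtain ⟨c, hc⟩ := mem_sup_span_singleton_iff.mp (hy (mem_colon_singleton_iff.mpr htb))
  refine mem_sup_span_singleton_iff.mpr ⟨c, mem_sup_span_singleton_iff.mpr ⟨b, ?_⟩⟩
  convert hc using 1; ring

end Ideal

namespace RingTheory.Sequence

open Ideal

variable {T : Type*} [CommRing T]

theorem isWeaklyRegular_quotient_cons_iff {J : Ideal T} {w : T} {zs : List T} :
    IsWeaklyRegular (T ⧸ J) (w :: zs) ↔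
      J.colon {w} ≤ J ∧ IsWeaklyRegular (T ⧸ (J ⊔ span {w})) zs := by
  rw [isWeaklyRegular_cons_iff, isSMulRegular_quotient_iff_colon_le,
    (quotSMulTopQuotientEquiv J w).isWeaklyRegular_congr]

theorem isRegular_quotient_iff {J : Ideal T} {zs : List T} :
    IsRegular (T ⧸ J) zs ↔ IsWeaklyRegular (T ⧸ J) zs ∧ J ⊔ ofList zs ≠ ⊤ := by
  rw [isRegular_iff, ne_comm, ← Submodule.Quotient.nontrivial_iff,
    (quotientSMulTopEquiv J _).toEquiv.nontrivial_congr, Ideal.Quotient.nontrivial_iff]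

theorem isWeaklyRegular_quotient_sup_span_pow_of_pow_pow {q : ℕ} (hq : 0 < q) {x : T}
    {J : Ideal T} {zs : List T} (hx : ∀ j k, J.colon {x ^ j} ≤ J ⊔ span {x ^ k})
    (hz : ∀ k, IsWeaklyRegular (T ⧸ (J ⊔ span {(x ^ k) ^ q})) zs) (k : ℕ) :
    IsWeaklyRegular (T ⧸ (J ⊔ span {x ^ k})) zs := by
  induction zs generalizing J k with
  | nil => exact .nil _ _
  | cons z zs ih =>
    have hzk : ∀ k, (J ⊔ span {x ^ k}).colon {z} ≤ J ⊔ span {x ^ k} := fun k =>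
      colon_le_sup_span_of_colon_mul_le (u := (x ^ k) ^ (q - 1)) (by rw [← pow_mul]; exact hx _ k)
        (by rw [pow_sub_one_mul hq.ne']; exact (isWeaklyRegular_quotient_cons_iff.mp (hz k)).1)
    refine isWeaklyRegular_quotient_cons_iff.mpr ⟨hzk k, ?_⟩
    rw [sup_right_comm]
    refine ih (fun j k => colon_sup_span_le_of_colon_le (hx j k) (hzk j)) (fun k => ?_) k
    rw [sup_right_comm]
    exact (isWeaklyRegular_quotient_cons_iff.mp (hz k)).2

theorem isWeaklyRegular_quotient_cons_of_pow {q : ℕ} (hq : 0 < q) {J : Ideal T} {x : T}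
    {zs : List T} (h : IsWeaklyRegular (T ⧸ J) (x ^ q :: zs)) :
    IsWeaklyRegular (T ⧸ J) (x :: zs) := by
  have hx : IsSMulRegular (T ⧸ J) x := by
    have := ((isWeaklyRegular_cons_iff _ _ _).mp h).1
    rw [← pow_sub_one_mul hq.ne'] at this
    exact this.of_mul
  have hcolon : ∀ j k, J.colon {x ^ j} ≤ J ⊔ span {x ^ k} := fun j _ =>
    ((isSMulRegular_quotient_iff_colon_le J _).mp (hx.pow j)).trans le_sup_left
  have hpow : ∀ k, IsWeaklyRegular (T ⧸ (J ⊔ span {(x ^ k) ^ q})) zs := fun k => by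
    rw [← pow_right_comm]
    exact (isWeaklyRegular_quotient_cons_iff.mp (isWeaklyRegular_pow_cons h k)).2
  refine isWeaklyRegular_quotient_cons_iff.mpr ⟨(isSMulRegular_quotient_iff_colon_le J x).mp hx, ?_⟩
  have := isWeaklyRegular_quotient_sup_span_pow_of_pow_pow hq hcolon hpow 1
  rwa [pow_one] at this

theorem isWeaklyRegular_quotient_sup_span_range {q : ℕ} (hq : 0 < q) {c : ℕ} {J : Ideal T}
    (g : Fin c → T) {zs : List T}
    (h : IsWeaklyRegular (T ⧸ J) (List.ofFn (fun j => g j ^ q) ++ zs)) :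
    IsWeaklyRegular (T ⧸ (J ⊔ span (Set.range g))) zs := by
  induction c generalizing J with
  | zero =>
    rw [Set.range_eq_empty, Ideal.span_empty, sup_bot_eq]
    simpa using h
  | succ c ih =>
    rw [List.ofFn_succ, List.cons_append] at h
    have := ih (fun j => g j.succ)
      (isWeaklyRegular_quotient_cons_iff.mp (isWeaklyRegular_quotient_cons_of_pow hq h)).2
    rw [Fin.range_fin_succ, Ideal.span_insert, ← sup_assoc]
    exact this

theorem isRegular_quotient_span_range_of_pow_eq {c q : ℕ} (hq : 0 < q) {fs g : Fin c → T}
    {ys : List T} (hreg : IsRegular T (List.ofFn fs ++ ys)) (hg : ∀ j, g j ^ q = fs j) :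
    IsRegular (T ⧸ span (Set.range g)) ys := by
  obtain rfl : fs = fun j => g j ^ q := funext fun j => (hg j).symm
  refine isRegular_quotient_iff.mpr ⟨?_, fun htop => ?_⟩
  · have := isWeaklyRegular_quotient_sup_span_range hq g
      (((quotEquivOfEqBot ⊥ rfl).symm.isWeaklyRegular_congr _).mp hreg.1)
    rwa [bot_sup_eq] at this
  · have hne : ofList (List.ofFn (fun j => g j ^ q) ++ ys) ≠ ⊤ := by
      simpa [smul_eq_mul, mul_top] using hreg.2.symm
    refine hne (radical_eq_top.mp (top_le_iff.mp (htop ▸ sup_le ?_ ?_)))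
    · rw [Ideal.span_le]
      rintro _ ⟨j, rfl⟩
      exact ⟨q, Ideal.subset_span (List.mem_append_left _ (List.mem_ofFn.mpr ⟨j, rfl⟩))⟩
    · exact (Ideal.span_mono fun _ => List.mem_append_right _).trans le_radical

theorem isWeaklyRegular_quotient_iSup {ι : Type*} [Nonempty ι] {J : ι → Ideal T}
    (hJ : Directed (· ≤ ·) J) {zs : List T} (h : ∀ i, IsWeaklyRegular (T ⧸ J i) zs) :
    IsWeaklyRegular (T ⧸ ⨆ i, J i) zs := by
  induction zs generalizing J with
  | nil => exact .nil _ _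
  | cons z zs ih =>
    simp only [isWeaklyRegular_quotient_cons_iff] at h ⊢
    refine ⟨fun t ht => ?_, ?_⟩
    · rw [mem_colon_singleton_iff, mem_iSup_of_directed _ hJ] at ht
      obtain ⟨i, hi⟩ := ht
      exact le_iSup J i ((h i).1 (mem_colon_singleton_iff.mpr hi))
    · have hJz : Directed (· ≤ ·) fun i => J i ⊔ span {z} :=
        hJ.mono_comp (· ≤ ·) fun _ _ hle => sup_le_sup_right hle _
      rw [iSup_sup]
      exact ih hJz fun i => (h i).2

theorem isRegular_quotient_iSup {ι : Type*} [Nonempty ι] {J : ι → Ideal T}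
    (hJ : Directed (· ≤ ·) J) {zs : List T} (h : ∀ i, IsRegular (T ⧸ J i) zs) :
    IsRegular (T ⧸ ⨆ i, J i) zs := by
  simp only [isRegular_quotient_iff] at h ⊢
  refine ⟨isWeaklyRegular_quotient_iSup hJ fun i => (h i).1, ?_⟩
  have hJzs : Directed (· ≤ ·) fun i => J i ⊔ ofList zs :=
    hJ.mono_comp (· ≤ ·) fun _ _ hle => sup_le_sup_right hle _
  rw [iSup_sup, ne_eq, eq_top_iff_one, mem_iSup_of_directed _ hJzs]
  rintro ⟨i, hi⟩
  exact (h i).2 ((eq_top_iff_one _).mpr hi)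

end RingTheory.Sequence

section PowerRoots

variable {M : Type*} [Monoid M] {p : ℕ}

theorem exists_pos_pow_eq_of_pow_succ_eq {ι : Type*} {r : ι → ℕ → M}
    (hr : ∀ j e, r j (e + 1) ^ p = r j e) (e : ℕ) : ∃ q, 0 < q ∧ ∀ j, r j e ^ q = r j 0 := by
  rcases p with _ | p
  -- for `p = 0` the hypothesis forces every `r j e` to be `1`
  · exact ⟨1, one_pos, fun j => by rw [pow_one, ← hr j e, ← hr j 0, pow_zero, pow_zero]⟩
  · refine ⟨(p + 1) ^ e, by positivity, fun j => ?_⟩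
    induction e with
    | zero => simp
    | succ e ih => rw [pow_succ', pow_mul, hr, ih]

theorem dvd_of_pow_succ_eq {s : ℕ → M} (hs : ∀ e, s (e + 1) ^ p = s e) (e : ℕ) :
    s (e + 1) ∣ s e := by
  rcases p with _ | p
  · rw [← hs e, pow_zero, ← hs (e + 1), pow_zero]
  · rw [← hs e]
    exact dvd_pow_self _ p.succ_ne_zero

end PowerRoots

open RingTheory.Sequence in
theorem regular_sequence_mod_p_power_roots_general
    (p c d : ℕ) (S T : Type u) [CommRing S]
    [CommRing T] [Algebra S T] [Module.FaithfullyFlat S T]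
    (f : Fin c → S) (y : Fin d → S)
    (hreg : IsRegular S (List.ofFn f ++ List.ofFn y))
    (r : Fin c → ℕ → T)
    (hr0 : ∀ j, r j 0 = algebraMap S T (f j))
    (hrp : ∀ j e, (r j (e + 1)) ^ p = r j e) :
    (∀ e : ℕ,
      IsRegular (T ⧸ Ideal.span (Set.range fun j => r j e))
        ((List.ofFn y).map (algebraMap S T))) ∧
      IsRegular (T ⧸ Ideal.span (Set.range fun je : Fin c × ℕ => r je.1 je.2))
        ((List.ofFn y).map (algebraMap S T)) := by
  have hT : IsRegular T (List.ofFn (fun j => r j 0) ++ (List.ofFn y).map (algebraMap S T)) := by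
    simpa [List.map_ofFn, Function.comp_def, hr0] using hreg.of_faithfullyFlat (S := T)
  have hstage : ∀ e, IsRegular (T ⧸ Ideal.span (Set.range fun j => r j e))
      ((List.ofFn y).map (algebraMap S T)) := fun e => by
    obtain ⟨q, hq, hrq⟩ := exists_pos_pow_eq_of_pow_succ_eq hrp e
    exact isRegular_quotient_span_range_of_pow_eq hq hT hrq
  have hmono : Monotone fun e => Ideal.span (Set.range fun j => r j e) :=
    monotone_nat_of_le_succ fun e => Ideal.span_le.mpr <| by
      rintro _ ⟨j, rfl⟩
      exact Ideal.mem_of_dvd _ (dvd_of_pow_succ_eq (hrp j) e) (Ideal.subset_span ⟨j, rfl⟩)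
  have hunion : Set.range (fun je : Fin c × ℕ => r je.1 je.2) = ⋃ e, Set.range fun j => r j e := by
    ext; simpa using exists_comm
  refine ⟨hstage, ?_⟩
  rw [hunion, Ideal.span_iUnion]
  exact isRegular_quotient_iSup hmono.directed_le hstage

open RingTheory.Sequence in
/-- Let `S` be a Noetherian ring, `f₁, …, f_c, y₁, …, y_d` a regular sequence on `S`, and
`S → T` a faithfully flat ring map.  Suppose each `f_j` admits a compatible system of
`p`-power roots `f_j^{1/p^e}` in `T`.  Then for every `e ≥ 0` the sequence `y₁, …, y_d` is
regular on `T/(f₁^{1/p^e}, …, f_c^{1/p^e})`, and hence also on the colimit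
`T/(f₁^{1/p^∞}, …, f_c^{1/p^∞}) = T/(f_j^{1/p^e} : j, e)`. -/
theorem regular_sequence_mod_p_power_roots
    (p c d : ℕ) (S T : Type u) [CommRing S] [IsNoetherianRing S]
    [CommRing T] [Algebra S T] [Module.FaithfullyFlat S T]
    (f : Fin c → S) (y : Fin d → S)
    (hreg : IsRegular S (List.ofFn f ++ List.ofFn y))
    (r : Fin c → ℕ → T)
    (hr0 : ∀ j, r j 0 = algebraMap S T (f j))
    (hrp : ∀ j e, (r j (e + 1)) ^ p = r j e) :
    (∀ e : ℕ,
      IsRegular (T ⧸ Ideal.span (Set.range fun j => r j e))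
        ((List.ofFn y).map (algebraMap S T))) ∧
      IsRegular (T ⧸ Ideal.span (Set.range fun je : Fin c × ℕ => r je.1 je.2))
        ((List.ofFn y).map (algebraMap S T)) :=
  regular_sequence_mod_p_power_roots_general p c d S T f y hreg r hr0 hrp
end
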